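/- arXiv:2110.07362 — 6 statements merged into one kernel-verified Lean document; each statement's English description precedes it below -/
import Mathlib

section
/- Let ζ₁,…,ζ_N be positive reals with ∑ᵢ ζᵢ = 1, and let Z = diag(ζ₁ I, …, ζ_N I) ∈ ℝ^{N·n × N·n}, 𝟙 ∈ ℝ^{N·n × n} the block column of N identity matrices, and M = diag(M_s, …, M_s) with M_s ∈ ℝ^{n×n} symmetric positive definite. Then for any γ ≥ 0, the matrix M_γ := M((1+γ)Z − γ Z 𝟙 𝟙ᵀ Z) is symmetric and positive definite. -/
/-!
In the ordering `Fin N × Fin n` of the block index every matrix involved is a Kronecker product: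
`Z = D ⊗ I`, `𝟙 𝟙ᵀ = J ⊗ I` and `M = I ⊗ M_s`, where `D = diag ζ` and `J` is the all-ones
matrix. Hence `M_γ = S ⊗ M_s` with `S = (1+γ) D − γ ζ ζᵀ = D + γ (D − ζ ζᵀ)`. The matrix
`D − ζ ζᵀ` is positive semidefinite by Cauchy–Schwarz, `(∑ ζᵢ xᵢ)² ≤ (∑ ζᵢ)(∑ ζᵢ xᵢ²)`, so `S` is
positive definite, and so is the Kronecker product of two positive definite matrices.
-/

open Matrix Kronecker

namespace Matrix

theorem sub_kronecker {l m n p α : Type*} [NonUnitalNonAssocRing α] (A₁ A₂ : Matrix l m α)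
    (B : Matrix n p α) : (A₁ - A₂) ⊗ₖ B = A₁ ⊗ₖ B - A₂ ⊗ₖ B := by
  ext; simp [sub_mul]

theorem dotProduct_diagonal_sub_vecMulVec_mulVec {ι : Type*} [Fintype ι] [DecidableEq ι]
    (w x : ι → ℝ) : star x ⬝ᵥ (diagonal w - vecMulVec w w) *ᵥ x
      = ∑ i, w i * x i ^ 2 - (∑ i, w i * x i) ^ 2 := by
  rw [sub_mulVec, dotProduct_sub, vecMulVec_mulVec, dotProduct_smul, star_trivial, op_smul_eq_mul,
    dotProduct_comm x w, ← sq]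
  simp only [dotProduct, mulVec_diagonal]
  congr 1
  exact Finset.sum_congr rfl fun i _ => by ring

theorem posSemidef_diagonal_sub_vecMulVec {ι : Type*} [Fintype ι] [DecidableEq ι] {w : ι → ℝ}
    (hw : ∀ i, 0 ≤ w i) (hsum : ∑ i, w i ≤ 1) : (diagonal w - vecMulVec w w).PosSemidef := by
  refine PosSemidef.of_dotProduct_mulVec_nonneg ?_ fun x => ?_
  · simp [IsHermitian]
  have hwx : 0 ≤ ∑ i, w i * x i ^ 2 := Finset.sum_nonneg fun i _ => mul_nonneg (hw i) (sq_nonneg _)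
  have hCS : (∑ i, w i * x i) ^ 2 ≤ (∑ i, w i) * ∑ i, w i * x i ^ 2 :=
    Finset.sum_sq_le_sum_mul_sum_of_sq_le_mul _ (fun i _ => hw i)
      (fun i _ => mul_nonneg (hw i) (sq_nonneg _)) fun i _ => le_of_eq (by ring)
  rw [dotProduct_diagonal_sub_vecMulVec_mulVec, sub_nonneg]
  exact hCS.trans (mul_le_of_le_one_left hwx hsum)

theorem diagonal_comp_fst_eq_diagonal_kronecker_one {ι κ α : Type*} [MulZeroOneClass α]
    [DecidableEq ι] [DecidableEq κ] (d : ι → α) :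
    diagonal (fun p : ι × κ => d p.1) = diagonal d ⊗ₖ 1 := by
  rw [← diagonal_one, diagonal_kronecker_diagonal]
  simp

theorem of_ite_fst_eq_eq_one_kronecker {ι κ α : Type*} [MulZeroOneClass α] [DecidableEq ι]
    (A : Matrix κ κ α) :
    (of fun p q : ι × κ => if p.1 = q.1 then A p.2 q.2 else 0) = 1 ⊗ₖ A := by
  ext p q
  simp [one_apply]

theorem of_ite_snd_eq_mul_transpose {ι κ α : Type*} [NonAssocSemiring α] [Fintype ι] [Fintype κ]
    [DecidableEq κ] :
    (of fun (p : ι × κ) b => if p.2 = b then (1 : α) else 0) *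
        (of fun (p : ι × κ) b => if p.2 = b then (1 : α) else 0)ᵀ = of (fun _ _ => 1) ⊗ₖ 1 := by
  ext p q
  simp [mul_apply, one_apply]

theorem diagonal_mul_of_one_mul_diagonal {ι α : Type*} [NonAssocSemiring α] [Fintype ι]
    [DecidableEq ι] (d : ι → α) :
    diagonal d * of (fun _ _ => (1 : α)) * diagonal d = vecMulVec d d := by
  ext i j
  simp [vecMulVec_apply]

end Matrix

/-- The matrix `M_γ = M((1+γ)Z − γ Z 𝟙 𝟙ᵀ Z)` is symmetric positive definite. -/
theorem Mgamma_posDef {N n : ℕ} (ζ : Fin N → ℝ) (hζ : ∀ i, 0 < ζ i)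
    (hsum : ∑ i, ζ i = 1)
    (Ms : Matrix (Fin n) (Fin n) ℝ) (hMs : Ms.PosDef) (γ : ℝ) (hγ : 0 ≤ γ) :
    let Z : Matrix (Fin N × Fin n) (Fin N × Fin n) ℝ := Matrix.diagonal fun p => ζ p.1
    let M : Matrix (Fin N × Fin n) (Fin N × Fin n) ℝ :=
      Matrix.of fun p q => if p.1 = q.1 then Ms p.2 q.2 else 0
    let E : Matrix (Fin N × Fin n) (Fin n) ℝ :=
      Matrix.of fun p b => if p.2 = b then (1 : ℝ) else 0
    (M * ((1 + γ) • Z - γ • (Z * (E * Eᵀ) * Z))).PosDef := by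
  intro Z M E
  have hkron : M * ((1 + γ) • Z - γ • (Z * (E * Eᵀ) * Z))
      = (diagonal ζ + γ • (diagonal ζ - vecMulVec ζ ζ)) ⊗ₖ Ms := by
    have hZ : Z = diagonal ζ ⊗ₖ 1 := diagonal_comp_fst_eq_diagonal_kronecker_one ζ
    have hM : M = 1 ⊗ₖ Ms := of_ite_fst_eq_eq_one_kronecker Ms
    have hE : E * Eᵀ = of (fun _ _ => 1) ⊗ₖ 1 := of_ite_snd_eq_mul_transpose
    rw [hZ, hM, hE, ← mul_kronecker_mul, ← mul_kronecker_mul, ← smul_kronecker,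
      ← smul_kronecker, mul_one, mul_one, ← sub_kronecker, ← mul_kronecker_mul, one_mul, mul_one,
      diagonal_mul_of_one_mul_diagonal]
    congr 1
    module
  rw [hkron]
  exact ((PosDef.diagonal hζ).add_posSemidef
    ((posSemidef_diagonal_sub_vecMulVec (fun i => (hζ i).le) hsum.le).smul hγ)).kronecker hMs
end

section
/- With the notation above (ζᵢ > 0, ∑ᵢ ζᵢ = 1, Z = diag(ζᵢ I), 𝟙 the block column of identities, M = diag(M_s,…,M_s) with M_s symmetric positive definite, γ ≥ 0), the inverse of M_γ = M((1+γ)Z − γ Z 𝟙 𝟙ᵀ Z) is given by M_γ⁻¹ = ((1/(1+γ)) Z⁻¹ + (γ/(1+γ)) 𝟙 𝟙ᵀ) M⁻¹. -/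
/-!
Since `(A * B)⁻¹ = B⁻¹ * A⁻¹` for square matrices (with the junk convention on both sides), it
suffices to invert the middle factor `A = (1 + γ) Z - γ Z J Z` with `J = 𝟙 𝟙ᵀ`. The normalisation
`∑ ζᵢ = 1` says exactly that `𝟙ᵀ Z 𝟙 = I`, hence `J Z J = J`, and with this relation a direct
multiplication shows that `(1 + γ)⁻¹ Z⁻¹ + γ (1 + γ)⁻¹ J` is a right inverse of `A`.
-/

open Matrix

theorem Matrix.inv_one_add_smul_sub_smul_mul_mul {K ι κ : Type*} [Field K] [Fintype ι]
    [DecidableEq ι] [Fintype κ] [DecidableEq κ] {Z : Matrix ι ι K} (hZ : IsUnit Z.det)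
    {E : Matrix ι κ K} (hE : Eᵀ * Z * E = 1) {γ : K} (hγ : 1 + γ ≠ 0) :
    ((1 + γ) • Z - γ • (Z * (E * Eᵀ) * Z))⁻¹ =
      (1 / (1 + γ)) • Z⁻¹ + (γ / (1 + γ)) • (E * Eᵀ) := by
  have hZZinv : Z * Z⁻¹ = 1 := mul_nonsing_inv Z hZ
  have hJZJ : Z * (E * Eᵀ) * Z * (E * Eᵀ) = Z * (E * Eᵀ) := by
    calc Z * (E * Eᵀ) * Z * (E * Eᵀ) = Z * E * (Eᵀ * Z * E) * Eᵀ := by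
          simp only [Matrix.mul_assoc]
      _ = Z * (E * Eᵀ) := by rw [hE, Matrix.mul_one, Matrix.mul_assoc]
  have hJZZinv : Z * (E * Eᵀ) * Z * Z⁻¹ = Z * (E * Eᵀ) := by
    rw [Matrix.mul_assoc, hZZinv, Matrix.mul_one]
  refine inv_eq_right_inv ?_
  simp only [Matrix.sub_mul, Matrix.mul_add, Matrix.smul_mul, Matrix.mul_smul]
  rw [hZZinv, hJZZinv, hJZJ]
  match_scalars <;> field_simp
  ring

theorem Matrix.transpose_mul_diagonal_mul_stack {K α κ : Type*} [CommSemiring K] [Fintype α]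
    [Fintype κ] [DecidableEq α] [DecidableEq κ] (ζ : α → K) :
    let E : Matrix (α × κ) κ K := of fun p b => if p.2 = b then 1 else 0
    Eᵀ * (diagonal fun p => ζ p.1 : Matrix (α × κ) (α × κ) K) * E =
      (∑ i, ζ i) • (1 : Matrix κ κ K) := by
  intro E
  ext b b'
  simp [E, mul_apply, diagonal_apply, one_apply, Fintype.sum_prod_type, Prod.ext_iff, ite_and,
    Finset.sum_ite_eq, Finset.sum_ite_eq', eq_comm]

theorem Mgamma_inv_general {N n : ℕ} (ζ : Fin N → ℝ) (hζ : ∀ i, 0 < ζ i)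
    (hsum : ∑ i, ζ i = 1)
    (Ms : Matrix (Fin n) (Fin n) ℝ) (γ : ℝ) (hγ : 0 ≤ γ) :
    let Z : Matrix (Fin N × Fin n) (Fin N × Fin n) ℝ := Matrix.diagonal fun p => ζ p.1
    let M : Matrix (Fin N × Fin n) (Fin N × Fin n) ℝ :=
      Matrix.of fun p q => if p.1 = q.1 then Ms p.2 q.2 else 0
    let E : Matrix (Fin N × Fin n) (Fin n) ℝ :=
      Matrix.of fun p b => if p.2 = b then (1 : ℝ) else 0
    (M * ((1 + γ) • Z - γ • (Z * (E * Eᵀ) * Z)))⁻¹ =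
      ((1 / (1 + γ)) • Z⁻¹ + (γ / (1 + γ)) • (E * Eᵀ)) * M⁻¹ := by
  intro Z M E
  have hZ : IsUnit Z.det := by
    rw [det_diagonal]
    exact (Finset.prod_pos fun p _ => hζ p.1).ne'.isUnit
  have hE : Eᵀ * Z * E = 1 := by
    rw [transpose_mul_diagonal_mul_stack ζ, hsum, one_smul]
  rw [Matrix.mul_inv_rev, inv_one_add_smul_sub_smul_mul_mul hZ hE (by positivity)]

/-- Explicit formula for the inverse of `M_γ`. -/
theorem Mgamma_inv {N n : ℕ} (ζ : Fin N → ℝ) (hζ : ∀ i, 0 < ζ i)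
    (hsum : ∑ i, ζ i = 1)
    (Ms : Matrix (Fin n) (Fin n) ℝ) (hMs : Ms.PosDef) (γ : ℝ) (hγ : 0 ≤ γ) :
    let Z : Matrix (Fin N × Fin n) (Fin N × Fin n) ℝ := Matrix.diagonal fun p => ζ p.1
    let M : Matrix (Fin N × Fin n) (Fin N × Fin n) ℝ :=
      Matrix.of fun p q => if p.1 = q.1 then Ms p.2 q.2 else 0
    let E : Matrix (Fin N × Fin n) (Fin n) ℝ :=
      Matrix.of fun p b => if p.2 = b then (1 : ℝ) else 0
    (M * ((1 + γ) • Z - γ • (Z * (E * Eᵀ) * Z)))⁻¹ =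
      ((1 / (1 + γ)) • Z⁻¹ + (γ / (1 + γ)) • (E * Eᵀ)) * M⁻¹ :=
  Mgamma_inv_general ζ hζ hsum Ms γ hγ
end

section
/- The matrix M((1+γ)Z − γ Z 𝟙 𝟙ᵀ Z) admits the decomposition M Z + γ (I − 𝟙 𝟙ᵀ Z)ᵀ M Z (I − 𝟙 𝟙ᵀ Z), where the weights ζᵢ are positive and sum to one. -/
/-!
Write `P = 𝟙𝟙ᵀ`. In Kronecker form `Z = diag ζ ⊗ I`, `M = I ⊗ M_s` and `P = J ⊗ I` with `J` the
all-ones matrix, so `M` commutes with `P` and `P Z P = (J diag ζ J) ⊗ I = (∑ ζᵢ) P = P`.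
Expanding `(I - Z P) M Z (I - P Z)`, the last term `Z P M Z P Z = Z M (P Z P) Z = Z P M Z` cancels
one of the cross terms, leaving `M Z - M Z P Z`, which is exactly what the left-hand side adds to `M Z`.
-/

open Matrix
open scoped Kronecker

theorem mul_sub_smul_eq_add_smul_conj_compl {R A : Type*} [CommRing R] [Ring A] [Algebra R A]
    {M Z P : A} (hMP : Commute M P) (hPZP : P * Z * P = P) (γ : R) :
    M * ((1 + γ) • Z - γ • (Z * P * Z)) =
      M * Z + γ • ((1 - Z * P) * (M * Z) * (1 - P * Z)) := by
  have hcancel : Z * P * M * Z * P * Z = Z * P * M * Z := by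
    calc Z * P * M * Z * P * Z = Z * M * (P * Z * P) * Z := by
          rw [mul_assoc Z P M, ← hMP.eq]; noncomm_ring
      _ = Z * P * M * Z := by rw [hPZP, mul_assoc Z M P, hMP.eq]; noncomm_ring
  have hconj : (1 - Z * P) * (M * Z) * (1 - P * Z) = M * Z - M * (Z * P * Z) := by
    calc (1 - Z * P) * (M * Z) * (1 - P * Z)
        = M * Z - M * Z * P * Z - Z * P * M * Z + Z * P * M * Z * P * Z := by noncomm_ring
      _ = M * Z - M * (Z * P * Z) := by rw [hcancel]; noncomm_ring
  rw [hconj, mul_sub, mul_smul_comm, mul_smul_comm, smul_sub, add_smul, one_smul]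
  abel

theorem commute_kronecker_one_one_kronecker {R l m : Type*} [CommSemiring R] [Fintype l]
    [Fintype m] [DecidableEq l] [DecidableEq m] (A : Matrix l l R) (B : Matrix m m R) :
    Commute (A ⊗ₖ (1 : Matrix m m R)) ((1 : Matrix l l R) ⊗ₖ B) := by
  simp only [Commute, SemiconjBy, ← mul_kronecker_mul, mul_one, one_mul]

theorem const_one_mul_diagonal_mul_const_one {R k l m : Type*} [CommSemiring R] [Fintype l]
    [DecidableEq l] (d : l → R) :
    (of fun _ _ => 1 : Matrix k l R) * diagonal d * (of fun _ _ => 1 : Matrix l m R) =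
      (∑ i, d i) • of fun _ _ => 1 := by
  ext i j
  simp [mul_apply, diagonal_apply]

theorem Mgamma_decomposition_general {N n : ℕ} (ζ : Fin N → ℝ)
    (hsum : ∑ i, ζ i = 1)
    (Ms : Matrix (Fin n) (Fin n) ℝ) (γ : ℝ) :
    let Z : Matrix (Fin N × Fin n) (Fin N × Fin n) ℝ := Matrix.diagonal fun p => ζ p.1
    let M : Matrix (Fin N × Fin n) (Fin N × Fin n) ℝ :=
      Matrix.of fun p q => if p.1 = q.1 then Ms p.2 q.2 else 0
    let E : Matrix (Fin N × Fin n) (Fin n) ℝ :=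
      Matrix.of fun p b => if p.2 = b then (1 : ℝ) else 0
    M * ((1 + γ) • Z - γ • (Z * (E * Eᵀ) * Z)) =
      M * Z + γ • ((1 - E * Eᵀ * Z)ᵀ * (M * Z) * (1 - E * Eᵀ * Z)) := by
  intro Z M E
  set J : Matrix (Fin N) (Fin N) ℝ := of fun _ _ => 1
  have hZ : Z = diagonal ζ ⊗ₖ 1 := by
    simp only [Z, ← diagonal_one, diagonal_kronecker_diagonal, mul_one]
  have hM : M = 1 ⊗ₖ Ms := by
    ext ⟨i, a⟩ ⟨j, b⟩
    simp [M, one_apply]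
  have hP : E * Eᵀ = J ⊗ₖ 1 := by
    ext ⟨i, a⟩ ⟨j, b⟩
    simp [E, J, mul_apply, one_apply]
  have hPZP : E * Eᵀ * Z * (E * Eᵀ) = E * Eᵀ := by
    rw [hP, hZ, ← mul_kronecker_mul, ← mul_kronecker_mul, const_one_mul_diagonal_mul_const_one,
      hsum, one_smul, mul_one, mul_one]
  have hPt : (E * Eᵀ * Z)ᵀ = Z * (E * Eᵀ) := by
    simp [transpose_mul, Z]
  rw [transpose_sub, transpose_one, hPt]
  refine mul_sub_smul_eq_add_smul_conj_compl ?_ hPZP γ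
  rw [hM, hP]
  exact (commute_kronecker_one_one_kronecker _ _).symm

/-- Decomposition `M_γ = M Z + γ (I − 𝟙𝟙ᵀZ)ᵀ M Z (I − 𝟙𝟙ᵀZ)`. -/
theorem Mgamma_decomposition {N n : ℕ} (ζ : Fin N → ℝ) (hζ : ∀ i, 0 < ζ i)
    (hsum : ∑ i, ζ i = 1)
    (Ms : Matrix (Fin n) (Fin n) ℝ) (hMs : Ms.PosDef) (γ : ℝ) :
    let Z : Matrix (Fin N × Fin n) (Fin N × Fin n) ℝ := Matrix.diagonal fun p => ζ p.1
    let M : Matrix (Fin N × Fin n) (Fin N × Fin n) ℝ :=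
      Matrix.of fun p q => if p.1 = q.1 then Ms p.2 q.2 else 0
    let E : Matrix (Fin N × Fin n) (Fin n) ℝ :=
      Matrix.of fun p b => if p.2 = b then (1 : ℝ) else 0
    M * ((1 + γ) • Z - γ • (Z * (E * Eᵀ) * Z)) =
      M * Z + γ • ((1 - E * Eᵀ * Z)ᵀ * (M * Z) * (1 - E * Eᵀ * Z)) :=
  Mgamma_decomposition_general ζ hsum Ms γ
end

section
/- Let M_s, A₀ ∈ ℝ^{n×n} be symmetric positive definite, let Aᵢ, i = 1,…,N, be symmetric positive definite with A₀ = ∑ᵢ ζᵢ Aᵢ for positive weights ζᵢ summing to one, and β > 0. Define L = I + (1/√β) M_s ∑ᵢ ζᵢ Aᵢ⁻¹ and P₀ = I + (1/√β) M_s A₀⁻¹. Then all eigenvalues of P₀⁻¹ L are real and greater than or equal to 1. -/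
/-!
Write `c = 1/√β`, `D = ∑ ζᵢ Aᵢ⁻¹ - A₀⁻¹` and `E = M_s⁻¹ + c A₀⁻¹`. Then `P₀ = M_s E` and
`L = M_s (E + c D)`, so `E (P₀⁻¹ L) = E + c D`. By the matrix Jensen inequality `D` is positive
semidefinite, and `E` is positive definite. If `P₀⁻¹ L v = μ v` with `v ≠ 0` (over `ℂ`), then
`v* E v + c v* D v = μ v* E v` with `v* E v > 0` and `v* D v ≥ 0`, hence `μ` is real and `μ ≥ 1`.
-/

open Matrix
open scoped MatrixOrder ComplexOrder

variable {ι κ 𝕜 : Type*} [Fintype ι] [Fintype κ] [RCLike 𝕜]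

theorem Matrix.PosSemidef.map_ofReal {M : Matrix ι ι ℝ} (hM : M.PosSemidef) :
    (M.map (algebraMap ℝ 𝕜)).PosSemidef := by
  obtain ⟨m, w, rfl⟩ := posSemidef_iff_eq_sum_vecMulVec.mp hM
  refine posSemidef_iff_eq_sum_vecMulVec.mpr ⟨m, fun i j => algebraMap ℝ 𝕜 (w i j), ?_⟩
  ext a b
  simp [vecMulVec, Matrix.sum_apply]

theorem Matrix.dotProduct_sum_smul_mulVec (ζ : κ → ℝ) (A : κ → Matrix ι ι ℝ) (x y : ι → ℝ) :
    x ⬝ᵥ ((∑ k, ζ k • A k) *ᵥ y) = ∑ k, ζ k * (x ⬝ᵥ (A k *ᵥ y)) := by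
  simp only [sum_mulVec, smul_mulVec, dotProduct_sum, dotProduct_smul, smul_eq_mul]

variable [DecidableEq ι]

theorem Matrix.PosDef.map_ofReal {M : Matrix ι ι ℝ} (hM : M.PosDef) :
    (M.map (algebraMap ℝ 𝕜)).PosDef := by
  refine hM.posSemidef.map_ofReal.posDef_iff_det_ne_zero.mpr ?_
  rw [← RingHom.mapMatrix_apply, ← RingHom.map_det]
  simpa using hM.det_pos.ne'

theorem Matrix.exists_mulVec_eq_smul_of_mem_spectrum {K : Type*} [Field K] {X : Matrix ι ι K}
    {μ : K} (hμ : μ ∈ spectrum K X) : ∃ v ≠ 0, X *ᵥ v = μ • v := by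
  rw [← spectrum_toLin', ← Module.End.hasEigenvalue_iff_mem_spectrum] at hμ
  obtain ⟨v, hv⟩ := hμ.exists_hasEigenvector
  exact ⟨v, hv.2, by simpa using hv.apply_eq_smul⟩

theorem Matrix.PosDef.one_le_of_mem_spectrum_of_mul_eq_add {E F X : Matrix ι ι 𝕜}
    (hE : E.PosDef) (hF : F.PosSemidef) (hX : E * X = E + F) {μ : 𝕜}
    (hμ : μ ∈ spectrum 𝕜 X) : 1 ≤ μ := by
  obtain ⟨v, hv, hXv⟩ := exists_mulVec_eq_smul_of_mem_spectrum hμ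
  have hEF : (E + F) *ᵥ v = μ • (E *ᵥ v) := by rw [← hX, ← mulVec_mulVec, hXv, mulVec_smul]
  have hquad := congrArg (star v ⬝ᵥ ·) hEF
  simp only [add_mulVec, dotProduct_add, dotProduct_smul, smul_eq_mul] at hquad
  refine le_of_mul_le_mul_right ?_ (hE.dotProduct_mulVec_pos hv)
  rw [one_mul, ← hquad]
  exact le_add_of_nonneg_right (hF.dotProduct_mulVec_nonneg v)

theorem Matrix.PosDef.two_mul_dotProduct_le {A : Matrix ι ι ℝ} (hA : A.PosDef) (x y : ι → ℝ) :
    2 * (x ⬝ᵥ y) ≤ x ⬝ᵥ (A⁻¹ *ᵥ x) + y ⬝ᵥ (A *ᵥ y) := by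
  set w := A⁻¹ *ᵥ x
  have hAw : A *ᵥ w = x := by
    rw [mulVec_mulVec, mul_nonsing_inv _ hA.det_pos.ne'.isUnit, one_mulVec]
  have hwA (z : ι → ℝ) : w ⬝ᵥ (A *ᵥ z) = x ⬝ᵥ z := by
    rw [dotProduct_mulVec, ← mulVec_transpose, ← conjTranspose_eq_transpose_of_trivial,
      hA.isHermitian.eq, hAw]
  have h := hA.posSemidef.dotProduct_mulVec_nonneg (y - w)
  rw [star_trivial, mulVec_sub, dotProduct_sub, sub_dotProduct, sub_dotProduct, hAw, hwA,
    dotProduct_comm y x, dotProduct_comm w x] at h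
  linarith

theorem Matrix.inv_sum_smul_le_sum_smul_inv {ζ : κ → ℝ} (hζ : ∀ k, 0 < ζ k)
    (hsum : ∑ k, ζ k = 1) {A : κ → Matrix ι ι ℝ} (hA : ∀ k, (A k).PosDef) :
    (∑ k, ζ k • A k)⁻¹ ≤ ∑ k, ζ k • (A k)⁻¹ := by
  have hκ : (Finset.univ : Finset κ).Nonempty :=
    Finset.nonempty_of_sum_ne_zero (hsum ▸ one_ne_zero)
  set A₀ := ∑ k, ζ k • A k
  have hA₀ : A₀.PosDef := posDef_sum hκ fun k _ => (hA k).smul (hζ k)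
  have hAinv : (∑ k, ζ k • (A k)⁻¹).PosDef := posDef_sum hκ fun k _ => (hA k).inv.smul (hζ k)
  refine le_iff.mpr (PosSemidef.of_dotProduct_mulVec_nonneg
    (hAinv.isHermitian.sub hA₀.inv.isHermitian) fun x => ?_)
  set y := A₀⁻¹ *ᵥ x
  have hA₀y : A₀ *ᵥ y = x := by
    rw [mulVec_mulVec, mul_nonsing_inv _ hA₀.det_pos.ne'.isUnit, one_mulVec]
  -- `x ⬝ A₀⁻¹ x = max_z (2 x ⬝ z - z ⬝ A₀ z)`, attained at `z = y`; compare termwise at `y`.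
  have hquad : x ⬝ᵥ (A₀⁻¹ *ᵥ x) = ∑ k, ζ k * (2 * (x ⬝ᵥ y) - y ⬝ᵥ (A k *ᵥ y)) := by
    simp only [mul_sub, Finset.sum_sub_distrib, ← Finset.sum_mul, hsum, one_mul,
      ← dotProduct_sum_smul_mulVec]
    rw [hA₀y, dotProduct_comm y x]
    ring
  rw [star_trivial, sub_mulVec, dotProduct_sub, dotProduct_sum_smul_mulVec, hquad, sub_nonneg]
  exact Finset.sum_le_sum fun k _ => mul_le_mul_of_nonneg_left
    (sub_le_iff_le_add.mpr ((hA k).two_mul_dotProduct_le x y)) (hζ k).le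

/-- All eigenvalues of `P₀⁻¹ L` are real and at least `1`. -/
theorem spectrum_P0inv_L {n N : ℕ} (ζ : Fin N → ℝ) (hζ : ∀ i, 0 < ζ i)
    (hsum : ∑ i, ζ i = 1)
    (Ms : Matrix (Fin n) (Fin n) ℝ) (hMs : Ms.PosDef)
    (A : Fin N → Matrix (Fin n) (Fin n) ℝ) (hA : ∀ i, (A i).PosDef)
    (A0 : Matrix (Fin n) (Fin n) ℝ) (hA0 : A0 = ∑ i, ζ i • A i)
    (β : ℝ) (hβ : 0 < β) :
    let L : Matrix (Fin n) (Fin n) ℝ :=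
      1 + (1 / Real.sqrt β) • (Ms * ∑ i, ζ i • (A i)⁻¹)
    let P0 : Matrix (Fin n) (Fin n) ℝ := 1 + (1 / Real.sqrt β) • (Ms * A0⁻¹)
    ∀ μ ∈ spectrum ℂ ((P0⁻¹ * L).map (algebraMap ℝ ℂ)), μ.im = 0 ∧ 1 ≤ μ.re := by
  intro L P0 μ hμ
  subst hA0
  set c := 1 / Real.sqrt β
  have hc : 0 < c := by positivity
  set S := ∑ i, ζ i • (A i)⁻¹
  set A0 := ∑ i, ζ i • A i
  set D := S - A0⁻¹
  have hD : D.PosSemidef := le_iff.mp (inv_sum_smul_le_sum_smul_inv hζ hsum hA)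
  set E := Ms⁻¹ + c • A0⁻¹
  have hE : E.PosDef := hMs.inv.add_posSemidef <| .smul (posSemidef_sum _ fun i _ =>
    (hA i).posSemidef.smul (hζ i).le).inv hc.le
  have hMs_inv : Ms * Ms⁻¹ = 1 := mul_nonsing_inv _ hMs.det_pos.ne'.isUnit
  have hP0 : P0 = Ms * E := by rw [mul_add, hMs_inv, mul_smul_comm]
  have hL : L = Ms * (E + c • D) := by
    rw [show E + c • D = Ms⁻¹ + c • S by simp only [E, D, smul_sub]; abel, mul_add, hMs_inv,
      mul_smul_comm]
  have hX : E * (P0⁻¹ * L) = E + c • D := by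
    rw [hP0, hL, Matrix.mul_inv_rev, mul_assoc, ← mul_assoc Ms⁻¹,
      nonsing_inv_mul _ hMs.det_pos.ne'.isUnit, one_mul, ← mul_assoc,
      mul_nonsing_inv _ hE.det_pos.ne'.isUnit, one_mul]
  have h1μ : 1 ≤ μ := hE.map_ofReal.one_le_of_mem_spectrum_of_mul_eq_add
    (hD.smul hc.le).map_ofReal (by rw [← Matrix.map_mul, hX, Matrix.map_add _ (map_add _)]) hμ
  exact ⟨(Complex.le_def.mp h1μ).2.symm, (Complex.le_def.mp h1μ).1⟩
end

section
/- Let Kᵢ = Aᵢ⁻¹ M_s, i = 1,…,N, where the Aᵢ are symmetric positive definite and M_s is symmetric positive definite, and let ζᵢ > 0 sum to one. Then the matrix ∑ᵢ ζᵢ Kᵢ² − (∑ᵢ ζᵢ Kᵢ)² has real and nonnegative eigenvalues. -/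
open Matrix
open scoped ComplexOrder MatrixOrder

/-!
With `Bᵢ = Aᵢ⁻¹` and `B̄ = ∑ ζⱼ Bⱼ`, expanding gives
`∑ ζᵢ (Bᵢ M)² − (∑ ζᵢ Bᵢ M)² = (∑ ζᵢ (Bᵢ − B̄) M (Bᵢ − B̄)) M`,
a product `P M` of two positive semidefinite matrices. Writing `M = Sᴴ S`, the nonzero spectrum
of `P M = (P Sᴴ) S` is that of `S P Sᴴ`, which is positive semidefinite.
-/

section WeightedVariance

variable {ι R A : Type*} [CommRing R] [Ring A] [Algebra R A]
  (s : Finset ι) {ζ : ι → R} (x : ι → A) (m : A)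

theorem Finset.sum_smul_sub_mul_mul_sub (hζ : ∑ i ∈ s, ζ i = 1) :
    ∑ i ∈ s, ζ i • ((x i - ∑ j ∈ s, ζ j • x j) * m * (x i - ∑ j ∈ s, ζ j • x j)) =
      ∑ i ∈ s, ζ i • (x i * m * x i) - (∑ i ∈ s, ζ i • x i) * m * ∑ i ∈ s, ζ i • x i := by
  set e := ∑ j ∈ s, ζ j • x j
  have expand : ∀ i, ζ i • ((x i - e) * m * (x i - e)) =
      ζ i • (x i * m * x i) - (ζ i • x i) * m * e - e * m * (ζ i • x i) + ζ i • (e * m * e) := by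
    intro i
    simp only [sub_mul, mul_sub, smul_sub, smul_mul_assoc, mul_smul_comm]
    abel
  simp only [expand, Finset.sum_add_distrib, Finset.sum_sub_distrib, ← Finset.sum_mul,
    ← Finset.mul_sum, ← Finset.sum_smul, hζ, one_smul]
  abel

theorem Finset.sum_smul_mul_sq_sub_sq (hζ : ∑ i ∈ s, ζ i = 1) :
    ∑ i ∈ s, ζ i • (x i * m * (x i * m)) -
        (∑ i ∈ s, ζ i • (x i * m)) * ∑ i ∈ s, ζ i • (x i * m) =
      (∑ i ∈ s, ζ i • ((x i - ∑ j ∈ s, ζ j • x j) * m * (x i - ∑ j ∈ s, ζ j • x j))) * m := by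
  rw [Finset.sum_smul_sub_mul_mul_sub s x m hζ]
  simp only [sub_mul, Finset.sum_mul, smul_mul_assoc, mul_assoc]

end WeightedVariance

namespace Matrix

variable {n : Type*} [Fintype n]

theorem posSemidef_sum_smul_mul_mul_self {ι R : Type*} [CommRing R] [PartialOrder R] [StarRing R]
    [StarOrderedRing R] (s : Finset ι) {ζ : ι → R} (hζ : ∀ i ∈ s, 0 ≤ ζ i)
    {B : ι → Matrix n n R} (hB : ∀ i ∈ s, (B i).IsHermitian) {M : Matrix n n R}
    (hM : M.PosSemidef) : (∑ i ∈ s, ζ i • (B i * M * B i)).PosSemidef := by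
  refine posSemidef_sum s fun i hi => PosSemidef.smul ?_ (hζ i hi)
  simpa only [(hB i hi).eq] using hM.conjTranspose_mul_mul_same (B i)

theorem PosSemidef.map_ofReal_s13 {𝕜 : Type*} [RCLike 𝕜] {M : Matrix n n ℝ} (hM : M.PosSemidef) :
    (M.map (algebraMap ℝ 𝕜)).PosSemidef := by
  classical
  obtain ⟨S, rfl⟩ := CStarAlgebra.nonneg_iff_eq_star_mul_self.mp hM.nonneg
  rw [star_eq_conjTranspose, Matrix.map_mul, conjTranspose_map _ fun _ => by simp]
  exact posSemidef_conjTranspose_mul_self _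

theorem PosSemidef.spectrum_mul_nonneg {𝕜 : Type*} [RCLike 𝕜] [DecidableEq n]
    {P Q : Matrix n n 𝕜} (hP : P.PosSemidef) (hQ : Q.PosSemidef) :
    spectrum 𝕜 (P * Q) ⊆ {a | 0 ≤ a} := by
  obtain ⟨S, rfl⟩ := CStarAlgebra.nonneg_iff_eq_star_mul_self.mp hQ.nonneg
  intro a ha
  rcases eq_or_ne a 0 with rfl | ha0
  · exact le_rfl
  have : a ∈ spectrum 𝕜 (S * P * Sᴴ) \ {0} := by
    rw [← star_eq_conjTranspose, mul_assoc, ← spectrum.nonzero_mul_comm, mul_assoc]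
    exact ⟨ha, ha0⟩
  exact (posSemidef_iff_isHermitian_and_spectrum_nonneg.mp
    (hP.mul_mul_conjTranspose_same S)).2 this.1

end Matrix

/-- The matrix `∑ ζᵢ Kᵢ² − (∑ ζᵢ Kᵢ)²` with `Kᵢ = Aᵢ⁻¹ M_s` has real nonnegative
eigenvalues. -/
theorem variance_matrix_nonneg_spectrum {n N : ℕ}
    (ζ : Fin N → ℝ) (hζ : ∀ i, 0 < ζ i) (hsum : ∑ i, ζ i = 1)
    (A : Fin N → Matrix (Fin n) (Fin n) ℝ) (hA : ∀ i, (A i).PosDef)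
    (Ms : Matrix (Fin n) (Fin n) ℝ) (hMs : Ms.PosDef) :
    let K : Fin N → Matrix (Fin n) (Fin n) ℝ := fun i => (A i)⁻¹ * Ms
    ∀ μ ∈ spectrum ℂ
        (((∑ i, ζ i • (K i * K i)) -
            (∑ i, ζ i • K i) * (∑ i, ζ i • K i)).map (algebraMap ℝ ℂ)),
      μ.im = 0 ∧ 0 ≤ μ.re := by
  intro K μ hμ
  set E := ∑ j, ζ j • (A j)⁻¹
  have hcentered : ∀ i, ((A i)⁻¹ - E).IsHermitian := fun i =>
    (hA i).isHermitian.inv.sub <| isSelfAdjoint_sum _ fun j _ =>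
      (hA j).isHermitian.inv.smul (IsSelfAdjoint.all (ζ j))
  have hP := posSemidef_sum_smul_mul_mul_self Finset.univ (fun i _ => (hζ i).le)
    (fun i _ => hcentered i) hMs.posSemidef
  rw [Finset.sum_smul_mul_sq_sub_sq _ (fun i => (A i)⁻¹) Ms hsum, Matrix.map_mul] at hμ
  obtain ⟨hre, him⟩ := Complex.nonneg_iff.mp <|
    hP.map_ofReal_s13.spectrum_mul_nonneg hMs.posSemidef.map_ofReal_s13 hμ
  exact ⟨him.symm, hre⟩
end

section
/- In the setting of Lemma 'Spectrum of S̃⁻¹S': let A = diag(ζ₁A₁,…,ζ_N A_N) with symmetric positive definite Aᵢ, M = diag(M_s,…,M_s) with M_s symmetric positive definite, Z = diag(ζᵢ I), 𝟙 the stacked identity, and M_γ = M((1+γ)Z − γZ𝟙𝟙ᵀZ). Then for γ = 0, the matrix H̃ := A⁻¹ M_γ A⁻¹ Z 𝟙 M_s 𝟙ᵀ Z has the same nonzero eigenvalues as the n×n matrix ∑ᵢ ζᵢ Kᵢ² where Kᵢ = Aᵢ⁻¹ M_s; consequently σ(I + (1/β)H̃) = {1} ∪ {1 + μⱼ/β :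 μⱼ ∈ σ(∑ᵢ ζᵢ Kᵢ²)}. -/
/-!
With `γ = 0` everything in `H̃` except the stacked identity `𝟙` is block diagonal, so
`H̃ = X Y` with `X = A⁻¹ M Z A⁻¹ Z 𝟙 M_s` of size `Nn × n` and `Y = 𝟙ᵀ Z`. The product the other
way round, `Y X = 𝟙ᵀ (block diagonal) 𝟙 M_s`, sums the blocks, and the scalings `ζᵢ` cancel to
leave `∑ ζᵢ Aᵢ⁻¹ M_s Aᵢ⁻¹ M_s = ∑ ζᵢ Kᵢ²`. Now `XY` and `YX` have the same nonzero eigenvalues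
(Weinstein–Aronszajn), while `0` is an eigenvalue of `XY` because its rank is at most `n < Nn`.
The spectrum of `I + H̃/β` is the image of that of `H̃` under `μ ↦ 1 + μ/β`.
-/

open Matrix

namespace Matrix

variable {ι m α : Type*} [DecidableEq ι]

/-- `Matrix.blockDiagonal` with the block index as the first coordinate, as in the paper. -/
def blockDiagonalFst [Zero α] (B : ι → Matrix m m α) : Matrix (ι × m) (ι × m) α :=
  reindex (Equiv.prodComm m ι) (Equiv.prodComm m ι) (blockDiagonal B)

@[simp]
theorem blockDiagonalFst_apply [Zero α] (B : ι → Matrix m m α) (p q : ι × m) :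
    blockDiagonalFst B p q = if p.1 = q.1 then B p.1 p.2 q.2 else 0 := by
  simp [blockDiagonalFst, blockDiagonal_apply]

theorem blockDiagonalFst_mul [Fintype ι] [Fintype m] [NonUnitalNonAssocSemiring α]
    (B C : ι → Matrix m m α) :
    blockDiagonalFst B * blockDiagonalFst C = blockDiagonalFst fun i => B i * C i := by
  simp only [blockDiagonalFst, reindex_apply, submatrix_mul_equiv, blockDiagonal_mul]

theorem blockDiagonalFst_one [DecidableEq m] [Zero α] [One α] :
    blockDiagonalFst (fun _ => 1 : ι → Matrix m m α) = 1 := by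
  rw [blockDiagonalFst, ← Pi.one_def, blockDiagonal_one, reindex_apply, submatrix_one_equiv]

theorem diagonal_fst_eq_blockDiagonalFst [DecidableEq m] [Zero α] (d : ι → α) :
    diagonal (fun p : ι × m => d p.1) = blockDiagonalFst fun i => diagonal fun _ => d i := by
  rw [blockDiagonalFst, blockDiagonal_diagonal, reindex_apply, submatrix_diagonal_equiv]
  rfl

theorem inv_blockDiagonalFst_smul [Fintype ι] [Fintype m] [DecidableEq m] {K : Type*} [Field K]
    (c : ι → K) (hc : ∀ i, c i ≠ 0) (B : ι → Matrix m m K) (hB : ∀ i, IsUnit (B i).det) :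
    (blockDiagonalFst fun i => c i • B i)⁻¹ = blockDiagonalFst fun i => (c i)⁻¹ • (B i)⁻¹ := by
  refine inv_eq_right_inv ?_
  rw [blockDiagonalFst_mul, ← blockDiagonalFst_one]
  congr 1; funext i
  rw [smul_mul_smul, mul_inv_cancel₀ (hc i), one_smul, mul_nonsing_inv _ (hB i)]

variable (ι) in
def stackedOne [Zero α] [One α] [DecidableEq m] : Matrix (ι × m) m α :=
  of fun p b => if p.2 = b then 1 else 0

theorem stackedOne_transpose_mul_blockDiagonalFst_mul_stackedOne [Fintype ι] [Fintype m]
    [DecidableEq m] [NonAssocSemiring α] (C : ι → Matrix m m α) :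
    (stackedOne ι : Matrix (ι × m) m α)ᵀ * blockDiagonalFst C *
      (stackedOne ι : Matrix (ι × m) m α) = ∑ i, C i := by
  ext a b
  simp [stackedOne, mul_apply, sum_apply, Fintype.sum_prod_type]

section spectrum

variable {K : Type*} [Field K] {l : Type*} [Fintype m] [Fintype l] [DecidableEq m]

theorem mem_spectrum_iff_det_one_sub_eq_zero (F : Matrix m l K) (G : Matrix l m K) {μ : K}
    (hμ : μ ≠ 0) : μ ∈ spectrum K (F * G) ↔ (1 - μ⁻¹ • F * G).det = 0 := by
  have : algebraMap K (Matrix m m K) μ - F * G = μ • (1 - μ⁻¹ • F * G) := by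
    rw [smul_sub, Matrix.smul_mul, smul_smul, mul_inv_cancel₀ hμ, one_smul,
      Algebra.algebraMap_eq_smul_one]
  rw [spectrum.mem_iff, isUnit_iff_isUnit_det, this, det_smul, isUnit_iff_ne_zero, not_not,
    mul_eq_zero, or_iff_right (pow_ne_zero _ hμ)]

theorem mem_spectrum_mul_comm [DecidableEq l] (F : Matrix m l K) (G : Matrix l m K) {μ : K}
    (hμ : μ ≠ 0) : μ ∈ spectrum K (F * G) ↔ μ ∈ spectrum K (G * F) := by
  rw [mem_spectrum_iff_det_one_sub_eq_zero F G hμ, mem_spectrum_iff_det_one_sub_eq_zero G F hμ,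
    det_one_sub_mul_comm, Matrix.mul_smul, Matrix.smul_mul]

theorem zero_mem_spectrum_mul_of_card_lt (F : Matrix m l K) (G : Matrix l m K)
    (h : Fintype.card l < Fintype.card m) : (0 : K) ∈ spectrum K (F * G) := by
  rw [spectrum.zero_mem_iff]
  intro hFG
  have := (rank_of_isUnit _ hFG).symm.le.trans
    ((rank_mul_le_left F G).trans (rank_le_card_width F))
  omega

end spectrum

end Matrix

theorem spectrum.one_add_smul_eq_image {K A : Type*} [Field K] [Ring A] [Algebra K A] (a : A)
    {c : K} (hc : c ≠ 0) : spectrum K (1 + c • a) = (fun μ => 1 + c * μ) '' spectrum K a := by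
  rw [← map_one (algebraMap K A), ← spectrum.singleton_add_eq, ← Units.val_mk0 hc,
    ← Units.smul_def, spectrum.unit_smul_eq_smul, Set.singleton_add, ← Set.image_smul,
    Set.image_image]
  rfl

theorem Set.eq_insert_of_mem_of_forall_ne {α : Type*} {S T : Set α} {a : α} (ha : a ∈ S)
    (h : ∀ x ≠ a, x ∈ S ↔ x ∈ T) : S = insert a T := by
  ext x
  by_cases hx : x = a
  · simp [hx, ha]
  · simp [hx, h x hx]

theorem spectrum_Stilde_inv_S_general {N n : ℕ} (hN : 2 ≤ N) (hn : 0 < n)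
    (ζ : Fin N → ℝ) (hζ : ∀ i, 0 < ζ i)
    (Ablk : Fin N → Matrix (Fin n) (Fin n) ℝ) (hA : ∀ i, (Ablk i).PosDef)
    (Ms : Matrix (Fin n) (Fin n) ℝ) (β : ℝ) (hβ : 0 < β) :
    let A : Matrix (Fin N × Fin n) (Fin N × Fin n) ℝ :=
      Matrix.of fun p q => if p.1 = q.1 then ζ p.1 * Ablk p.1 p.2 q.2 else 0
    let Z : Matrix (Fin N × Fin n) (Fin N × Fin n) ℝ := Matrix.diagonal fun p => ζ p.1
    let M : Matrix (Fin N × Fin n) (Fin N × Fin n) ℝ :=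
      Matrix.of fun p q => if p.1 = q.1 then Ms p.2 q.2 else 0
    let E : Matrix (Fin N × Fin n) (Fin n) ℝ :=
      Matrix.of fun p b => if p.2 = b then (1 : ℝ) else 0
    let γ : ℝ := 0
    let Mγ : Matrix (Fin N × Fin n) (Fin N × Fin n) ℝ :=
      M * ((1 + γ) • Z - γ • (Z * (E * Eᵀ) * Z))
    let Ht : Matrix (Fin N × Fin n) (Fin N × Fin n) ℝ :=
      A⁻¹ * Mγ * A⁻¹ * (Z * E * Ms * Eᵀ * Z)
    let K : Fin N → Matrix (Fin n) (Fin n) ℝ := fun i => (Ablk i)⁻¹ * Ms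
    (∀ μ : ℝ, μ ≠ 0 →
      (μ ∈ spectrum ℝ Ht ↔ μ ∈ spectrum ℝ (∑ i, ζ i • (K i * K i)))) ∧
    spectrum ℝ ((1 : Matrix (Fin N × Fin n) (Fin N × Fin n) ℝ) + (1 / β) • Ht) =
      {1} ∪ {t | ∃ μ ∈ spectrum ℝ (∑ i, ζ i • (K i * K i)), t = 1 + μ / β} := by
  intro A Z M E γ Mγ Ht K
  have hAblk : A = blockDiagonalFst fun i => ζ i • Ablk i := by ext; simp [A]
  have hZ : Z = blockDiagonalFst fun i => ζ i • 1 := by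
    simp only [Z, diagonal_fst_eq_blockDiagonalFst, smul_one_eq_diagonal]
  have hM : M = blockDiagonalFst fun _ => Ms := by ext; simp [M]
  have hMγ : Mγ = M * Z := by simp [Mγ, γ]
  have hE : E = stackedOne (Fin N) := rfl
  set X := A⁻¹ * Mγ * A⁻¹ * Z * E * Ms
  have hHt : Ht = X * (Eᵀ * Z) := by simp only [Ht, X, Matrix.mul_assoc]
  have hXE : Eᵀ * Z * X = ∑ i, ζ i • (K i * K i) := by
    have hblocks : Z * A⁻¹ * Mγ * A⁻¹ * Z =
        blockDiagonalFst fun i => ζ i • ((Ablk i)⁻¹ * Ms * (Ablk i)⁻¹) := by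
      rw [hMγ, hZ, hAblk, inv_blockDiagonalFst_smul ζ (fun i => (hζ i).ne') Ablk
        fun i => (hA i).det_pos.ne'.isUnit, hM]
      simp only [blockDiagonalFst_mul]
      congr 1; funext i
      simp only [Matrix.smul_mul, Matrix.mul_smul, smul_smul, Matrix.one_mul, Matrix.mul_one]
      congr 1
      field_simp [(hζ i).ne']
    calc Eᵀ * Z * X = Eᵀ * (Z * A⁻¹ * Mγ * A⁻¹ * Z) * E * Ms := by
          simp only [X, Matrix.mul_assoc]
      _ = _ := by
        rw [hblocks, hE, stackedOne_transpose_mul_blockDiagonalFst_mul_stackedOne, Finset.sum_mul]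
        simp only [K, Matrix.smul_mul, Matrix.mul_assoc]
  have hnonzero : ∀ μ : ℝ, μ ≠ 0 →
      (μ ∈ spectrum ℝ Ht ↔ μ ∈ spectrum ℝ (∑ i, ζ i • (K i * K i))) :=
    fun μ hμ => hHt ▸ hXE ▸ mem_spectrum_mul_comm X (Eᵀ * Z) hμ
  have hzero : (0 : ℝ) ∈ spectrum ℝ Ht := by
    refine hHt ▸ zero_mem_spectrum_mul_of_card_lt X (Eᵀ * Z) ?_
    simp only [Fintype.card_prod, Fintype.card_fin]
    nlinarith
  refine ⟨hnonzero, ?_⟩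
  rw [spectrum.one_add_smul_eq_image _ (by positivity),
    Set.eq_insert_of_mem_of_forall_ne hzero hnonzero, Set.image_insert_eq]
  ext t
  simp [eq_comm, div_eq_inv_mul]

/-- Spectrum of `S̃⁻¹S` for `γ = 0`: the nonzero eigenvalues of
`H̃ = A⁻¹ M_γ A⁻¹ Z 𝟙 M_s 𝟙ᵀ Z` are those of `∑ᵢ ζᵢ Kᵢ²`, and
`σ(I + H̃/β) = {1} ∪ {1 + μ/β : μ ∈ σ(∑ᵢ ζᵢ Kᵢ²)}`. -/
theorem spectrum_Stilde_inv_S {N n : ℕ} (hN : 2 ≤ N) (hn : 0 < n)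
    (ζ : Fin N → ℝ) (hζ : ∀ i, 0 < ζ i) (hsum : ∑ i, ζ i = 1)
    (Ablk : Fin N → Matrix (Fin n) (Fin n) ℝ) (hA : ∀ i, (Ablk i).PosDef)
    (Ms : Matrix (Fin n) (Fin n) ℝ) (hMs : Ms.PosDef) (β : ℝ) (hβ : 0 < β) :
    let A : Matrix (Fin N × Fin n) (Fin N × Fin n) ℝ :=
      Matrix.of fun p q => if p.1 = q.1 then ζ p.1 * Ablk p.1 p.2 q.2 else 0
    let Z : Matrix (Fin N × Fin n) (Fin N × Fin n) ℝ := Matrix.diagonal fun p => ζ p.1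
    let M : Matrix (Fin N × Fin n) (Fin N × Fin n) ℝ :=
      Matrix.of fun p q => if p.1 = q.1 then Ms p.2 q.2 else 0
    let E : Matrix (Fin N × Fin n) (Fin n) ℝ :=
      Matrix.of fun p b => if p.2 = b then (1 : ℝ) else 0
    let γ : ℝ := 0
    let Mγ : Matrix (Fin N × Fin n) (Fin N × Fin n) ℝ :=
      M * ((1 + γ) • Z - γ • (Z * (E * Eᵀ) * Z))
    let Ht : Matrix (Fin N × Fin n) (Fin N × Fin n) ℝ :=
      A⁻¹ * Mγ * A⁻¹ * (Z * E * Ms * Eᵀ * Z)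
    let K : Fin N → Matrix (Fin n) (Fin n) ℝ := fun i => (Ablk i)⁻¹ * Ms
    (∀ μ : ℝ, μ ≠ 0 →
      (μ ∈ spectrum ℝ Ht ↔ μ ∈ spectrum ℝ (∑ i, ζ i • (K i * K i)))) ∧
    spectrum ℝ ((1 : Matrix (Fin N × Fin n) (Fin N × Fin n) ℝ) + (1 / β) • Ht) =
      {1} ∪ {t | ∃ μ ∈ spectrum ℝ (∑ i, ζ i • (K i * K i)), t = 1 + μ / β} :=
  spectrum_Stilde_inv_S_general hN hn ζ hζ Ablk hA Ms β hβ
end
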